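/- Let H be a real symmetric positive-definite n×n matrix, μ > 0, and let b̄_i > 0, b̲_i > 0 for i = 1, …, n define the open box Ω = {u ∈ ℝ^n : −b̲_i < u_i < b̄_i}. Let B(u) = ∑_i[−ln(b̄_i − u_i) + ln(b̄_i) − u_i/b̄_i − ln(b̲_i + u_i) + ln(b̲_i) + u_i/b̲_i] be the gradient-recentered log-barrier of the box, and set m = min_i 8/(b̄_i + b̲_i)². For θ_x, θ_y ∈ ℝ^n suppose U_x ∈ Ω minimizes u ↦ (1/2)⟨u, Hu⟩ − ⟨θ_x, u⟩ + μB(u) over Ω and U_y ∈ Ω minimizes u ↦ (1/2)⟨u, Hu⟩ − ⟨θ_y, u⟩ + μB(u) over Ω. Then ⟨U_x − U_y, (H + μmI)(U_x − U_y)⟩ ≤ ⟨U_x − U_y, θ_x − θ_y⟩. -/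

import Mathlib

open RealInnerProductSpace Matrix

/-! The recentered log-barrier of the box is a sum of one-dimensional barriers whose second
derivative `(hi - t)⁻² + (lo + t)⁻²` is at least `8 / (hi + lo)²`, so it is `m`-strongly convex on
the box for the Euclidean norm. If `x` minimizes `½⟪u, A u⟫ - ⟪θ, u⟫ + φ u` over the box with `φ`
strongly convex, comparing `x` with the points of the segment towards `y` and letting them tend
to `x` gives a first-order variational inequality. Adding the inequalities for `(x, θx)` and
`(y, θy)` cancels the barrier values and leaves the slope bound. -/

noncomputable def logBarrier (lo hi t : ℝ) : ℝ :=
  -Real.log (hi - t) + Real.log hi - t / hi - Real.log (lo + t) + Real.log lo + t / lo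

lemma eight_div_add_sq_le_inv_sq_add_inv_sq {a b : ℝ} (ha : 0 < a) (hb : 0 < b) :
    8 / (a + b) ^ 2 ≤ a⁻¹ ^ 2 + b⁻¹ ^ 2 := by
  rw [div_le_iff₀ (by positivity)]
  have hab : a⁻¹ * b⁻¹ * (a + b) ^ 2 ≥ 4 := by
    rw [ge_iff_le, show a⁻¹ * b⁻¹ * (a + b) ^ 2 = 4 + a⁻¹ * b⁻¹ * (a - b) ^ 2 by
      field_simp; ring]
    have : 0 ≤ a⁻¹ * b⁻¹ * (a - b) ^ 2 := by positivity
    linarith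
  nlinarith [sq_nonneg (a⁻¹ - b⁻¹), sq_nonneg (a + b)]

section LogBarrier

variable {lo hi t : ℝ}

lemma hasDerivAt_logBarrier (ht : t ∈ Set.Ioo (-lo) hi) :
    HasDerivAt (logBarrier lo hi) ((hi - t)⁻¹ - hi⁻¹ - (lo + t)⁻¹ + lo⁻¹) t := by
  have hhi : hi - t ≠ 0 := by linarith [ht.2]
  have hlo : lo + t ≠ 0 := by linarith [ht.1]
  have := ((((((hasDerivAt_id' t).const_sub hi).log hhi).neg.add_const (Real.log hi)).sub
    ((hasDerivAt_id' t).div_const hi)).sub (((hasDerivAt_id' t).const_add lo).log hlo)).add_const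
      (Real.log lo) |>.add ((hasDerivAt_id' t).div_const lo)
  exact this.congr_deriv (by ring)

lemma hasDerivAt_logBarrier_deriv (ht : t ∈ Set.Ioo (-lo) hi) :
    HasDerivAt (fun t ↦ (hi - t)⁻¹ - hi⁻¹ - (lo + t)⁻¹ + lo⁻¹)
      ((hi - t)⁻¹ ^ 2 + (lo + t)⁻¹ ^ 2) t := by
  have hhi : hi - t ≠ 0 := by linarith [ht.2]
  have hlo : lo + t ≠ 0 := by linarith [ht.1]
  have := (((((hasDerivAt_id' t).const_sub hi).inv hhi).sub_const hi⁻¹).sub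
    (((hasDerivAt_id' t).const_add lo).inv hlo)).add_const lo⁻¹
  exact this.congr_deriv (by rw [inv_pow, inv_pow]; ring)

end LogBarrier

lemma strongConvexOn_logBarrier (lo hi : ℝ) :
    StrongConvexOn (Set.Ioo (-lo) hi) (8 / (hi + lo) ^ 2) (logBarrier lo hi) := by
  set c := 8 / (hi + lo) ^ 2
  rw [strongConvexOn_iff_convex]
  simp only [Real.norm_eq_abs, sq_abs]
  have hderiv (t) (ht : t ∈ Set.Ioo (-lo) hi) :
      HasDerivAt (fun x ↦ logBarrier lo hi x - c / 2 * x ^ 2)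
        ((hi - t)⁻¹ - hi⁻¹ - (lo + t)⁻¹ + lo⁻¹ - c * t) t :=
    ((hasDerivAt_logBarrier ht).sub ((hasDerivAt_pow 2 t).const_mul (c / 2))).congr_deriv
      (by ring)
  have hderiv2 (t) (ht : t ∈ Set.Ioo (-lo) hi) :
      HasDerivAt (fun x ↦ (hi - x)⁻¹ - hi⁻¹ - (lo + x)⁻¹ + lo⁻¹ - c * x)
        ((hi - t)⁻¹ ^ 2 + (lo + t)⁻¹ ^ 2 - c) t :=
    ((hasDerivAt_logBarrier_deriv ht).sub ((hasDerivAt_id' t).const_mul c)).congr_deriv (by ring)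
  refine convexOn_of_hasDerivWithinAt2_nonneg (convex_Ioo _ _)
    (f' := fun t ↦ (hi - t)⁻¹ - hi⁻¹ - (lo + t)⁻¹ + lo⁻¹ - c * t)
    (f'' := fun t ↦ (hi - t)⁻¹ ^ 2 + (lo + t)⁻¹ ^ 2 - c)
    (fun t ht ↦ (hderiv t ht).continuousAt.continuousWithinAt) ?_ ?_ ?_ <;>
    rw [isOpen_Ioo.interior_eq]
  · exact fun t ht ↦ (hderiv t ht).hasDerivWithinAt
  · exact fun t ht ↦ (hderiv2 t ht).hasDerivWithinAt
  · intro t ht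
    have := eight_div_add_sq_le_inv_sq_add_inv_sq (sub_pos.2 ht.2) (neg_lt_iff_pos_add'.1 ht.1)
    rw [sub_add_add_cancel] at this
    linarith

lemma StrongConvexOn.const_mul {E : Type*} [NormedAddCommGroup E] [NormedSpace ℝ E] {s : Set E}
    {m c : ℝ} {f : E → ℝ} (hf : StrongConvexOn s m f) (hc : 0 ≤ c) :
    StrongConvexOn s (c * m) (fun x ↦ c * f x) :=
  ⟨hf.1, fun x hx y hy a b ha hb hab ↦
    (mul_le_mul_of_nonneg_left (hf.2 hx hy ha hb hab) hc).trans_eq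
      (by simp only [smul_eq_mul]; ring)⟩

lemma StrongConvexOn.euclideanSpace_sum {ι : Type*} [Fintype ι] {s : ι → Set ℝ} {m : ℝ}
    {g : ι → ℝ → ℝ} (hg : ∀ i, StrongConvexOn (s i) m (g i)) :
    StrongConvexOn {x : EuclideanSpace ℝ ι | ∀ i, x i ∈ s i} m (fun x ↦ ∑ i, g i (x i)) := by
  refine ⟨fun x hx y hy a b ha hb hab i ↦ by simpa using (hg i).1 (hx i) (hy i) ha hb hab,
    fun x hx y hy a b ha hb hab ↦ ?_⟩
  calc ∑ i, g i ((a • x + b • y) i)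
      ≤ ∑ i, (a * g i (x i) + b * g i (y i) - a * b * (m / 2 * (x i - y i) ^ 2)) := by
        refine Finset.sum_le_sum fun i _ ↦ ?_
        simpa [sq_abs] using (hg i).2 (hx i) (hy i) ha hb hab
    _ = a • ∑ i, g i (x i) + b • ∑ i, g i (y i) - a * b * (m / 2 * ‖x - y‖ ^ 2) := by
        simp only [EuclideanSpace.norm_sq_eq, PiLp.sub_apply, Real.norm_eq_abs, sq_abs,
          smul_eq_mul, Finset.mul_sum, Finset.sum_add_distrib, Finset.sum_sub_distrib]

open Filter Topology in
lemma nonneg_of_forall_mem_Ioo_add_mul_nonneg {K C : ℝ}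
    (h : ∀ l ∈ Set.Ioo (0 : ℝ) 1, 0 ≤ K + l * C) : 0 ≤ K := by
  have hlim : Tendsto (fun l : ℝ ↦ K + l * C) (𝓝[>] 0) (𝓝 K) := by
    have : Continuous fun l : ℝ ↦ K + l * C := by fun_prop
    simpa using (this.tendsto 0).mono_left nhdsWithin_le_nhds
  exact ge_of_tendsto hlim (eventually_of_mem (Ioo_mem_nhdsGT one_pos) h)

section Objective

variable {E : Type*} [NormedAddCommGroup E] [InnerProductSpace ℝ E]

noncomputable def barrierMPCObjective (A : E →ₗ[ℝ] E) (θ : E) (φ : E → ℝ) (u : E) : ℝ :=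
  (1 / 2) * ⟪u, A u⟫ - ⟪θ, u⟫ + φ u

variable {A : E →ₗ[ℝ] E} {θ : E} {φ : E → ℝ} {s : Set E} {m : ℝ}

lemma barrierMPCObjective_add_smul (hA : A.IsSymmetric) (x v : E) (l : ℝ) :
    barrierMPCObjective A θ φ (x + l • v) = barrierMPCObjective A θ φ x + l * ⟪A x - θ, v⟫ +
      l ^ 2 / 2 * ⟪v, A v⟫ + (φ (x + l • v) - φ x) := by
  simp only [barrierMPCObjective, map_add, map_smul, inner_add_left, inner_add_right,
    real_inner_smul_left, real_inner_smul_right, inner_sub_left, ← hA x v,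
    real_inner_comm x θ, real_inner_comm v (A x)]
  ring

lemma StrongConvexOn.variational_inequality (hφ : StrongConvexOn s m φ) (hA : A.IsSymmetric)
    {x y : E} (hx : x ∈ s) (hy : y ∈ s) (hmin : IsMinOn (barrierMPCObjective A θ φ) s x) :
    m / 2 * ‖y - x‖ ^ 2 ≤ ⟪A x - θ, y - x⟫ + φ y - φ x := by
  obtain ⟨v, rfl⟩ : ∃ v, y = x + v := ⟨y - x, by abel⟩
  simp only [add_sub_cancel_left]
  have hsegment : ∀ l ∈ Set.Ioo (0 : ℝ) 1,
      0 ≤ (⟪A x - θ, v⟫ + φ (x + v) - φ x - m / 2 * ‖v‖ ^ 2) +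
        l * (1 / 2 * ⟪v, A v⟫ + m / 2 * ‖v‖ ^ 2) := by
    intro l hl
    have hz : (1 - l) • x + l • (x + v) = x + l • v := by module
    have hconv := hφ.2 hx hy (sub_nonneg.2 hl.2.le) hl.1.le (sub_add_cancel 1 l)
    have hopt := isMinOn_iff.1 hmin _
      (hφ.1 hx hy (sub_nonneg.2 hl.2.le) hl.1.le (sub_add_cancel 1 l))
    rw [hz, sub_add_cancel_left, norm_neg, smul_eq_mul, smul_eq_mul] at hconv
    rw [hz, barrierMPCObjective_add_smul hA] at hopt
    have : 0 ≤ l * ((⟪A x - θ, v⟫ + φ (x + v) - φ x - m / 2 * ‖v‖ ^ 2) +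
        l * (1 / 2 * ⟪v, A v⟫ + m / 2 * ‖v‖ ^ 2)) := by linarith
    exact (mul_nonneg_iff_of_pos_left hl.1).1 this
  linarith [nonneg_of_forall_mem_Ioo_add_mul_nonneg hsegment]

lemma StrongConvexOn.inner_sub_le_of_isMinOn (hφ : StrongConvexOn s m φ) (hA : A.IsSymmetric)
    {x y θx θy : E} (hx : x ∈ s) (hy : y ∈ s) (hminx : IsMinOn (barrierMPCObjective A θx φ) s x)
    (hminy : IsMinOn (barrierMPCObjective A θy φ) s y) :
    ⟪x - y, A (x - y)⟫ + m * ‖x - y‖ ^ 2 ≤ ⟪x - y, θx - θy⟫ := by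
  have hx' := hφ.variational_inequality hA hx hy hminx
  have hy' := hφ.variational_inequality hA hy hx hminy
  have hsum : ⟪A x - θx, y - x⟫ + ⟪A y - θy, x - y⟫ = ⟪x - y, θx - θy⟫ - ⟪x - y, A (x - y)⟫ := by
    simp only [map_sub, inner_sub_left, inner_sub_right, real_inner_comm (A x),
      real_inner_comm (A y), real_inner_comm θx, real_inner_comm θy]
    ring
  rw [norm_sub_rev] at hx'
  linarith

end Objective

theorem barrierMPC_box_slope_restricted {n : ℕ}
    (H : Matrix (Fin n) (Fin n) ℝ) (hHsym : H.IsSymm)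
    (μ : ℝ) (hμ : 0 < μ)
    (bU bL : Fin n → ℝ)
    (θx θy Ux Uy : EuclideanSpace ℝ (Fin n))
    (hUx : ∀ i, -bL i < Ux i ∧ Ux i < bU i)
    (hUy : ∀ i, -bL i < Uy i ∧ Uy i < bU i)
    (hminx : ∀ u : EuclideanSpace ℝ (Fin n), (∀ i, -bL i < u i ∧ u i < bU i) →
      (1 / 2) * ⟪Ux, Matrix.toEuclideanLin H Ux⟫ - ⟪θx, Ux⟫ +
          μ * ∑ i, (-Real.log (bU i - Ux i) + Real.log (bU i) - Ux i / bU i -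
            Real.log (bL i + Ux i) + Real.log (bL i) + Ux i / bL i) ≤
        (1 / 2) * ⟪u, Matrix.toEuclideanLin H u⟫ - ⟪θx, u⟫ +
          μ * ∑ i, (-Real.log (bU i - u i) + Real.log (bU i) - u i / bU i -
            Real.log (bL i + u i) + Real.log (bL i) + u i / bL i))
    (hminy : ∀ u : EuclideanSpace ℝ (Fin n), (∀ i, -bL i < u i ∧ u i < bU i) →
      (1 / 2) * ⟪Uy, Matrix.toEuclideanLin H Uy⟫ - ⟪θy, Uy⟫ +
          μ * ∑ i, (-Real.log (bU i - Uy i) + Real.log (bU i) - Uy i / bU i -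
            Real.log (bL i + Uy i) + Real.log (bL i) + Uy i / bL i) ≤
        (1 / 2) * ⟪u, Matrix.toEuclideanLin H u⟫ - ⟪θy, u⟫ +
          μ * ∑ i, (-Real.log (bU i - u i) + Real.log (bU i) - u i / bU i -
            Real.log (bL i + u i) + Real.log (bL i) + u i / bL i)) :
    ⟪Ux - Uy, Matrix.toEuclideanLin
        (H + (μ * ⨅ i, 8 / (bU i + bL i) ^ 2) • (1 : Matrix (Fin n) (Fin n) ℝ))
        (Ux - Uy)⟫ ≤
      ⟪Ux - Uy, θx - θy⟫ := by
  set m := ⨅ i, 8 / (bU i + bL i) ^ 2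
  have hB : StrongConvexOn {u : EuclideanSpace ℝ (Fin n) | ∀ i, u i ∈ Set.Ioo (-bL i) (bU i)}
      (μ * m) fun u ↦ μ * ∑ i, logBarrier (bL i) (bU i) (u i) :=
    (StrongConvexOn.euclideanSpace_sum fun i ↦ (strongConvexOn_logBarrier (bL i) (bU i)).mono
      (ciInf_le (Set.finite_range _).bddBelow i)).const_mul hμ.le
  have hA := isSymmetric_toEuclideanLin_iff.2 (isHermitian_iff_isSymm.2 hHsym)
  -- `hminx` and `hminy` are the `IsMinOn` statements with `barrierMPCObjective` unfolded.
  have key := hB.inner_sub_le_of_isMinOn hA hUx hUy (isMinOn_iff.2 hminx) (isMinOn_iff.2 hminy)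
  rwa [map_add, map_smul, toLpLin_one, LinearMap.add_apply, LinearMap.smul_apply,
    LinearMap.id_apply, inner_add_right, real_inner_smul_right, real_inner_self_eq_norm_sq]
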